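/- Let p be a prime and m ≥ 2, R = ℤ/p^m ℤ, and P = (p). Then P is a prime ideal of R with |P| = p^{m-1}, and Γ_P(R) is isomorphic to the complete split graph K_{p^{m-1}-1} ∨ K̄_{p^{m-1}(p-1)}. -/

import Mathlib

def primeIdealGraph (R : Type*) [CommRing R] (P : Ideal R) :
    SimpleGraph {x : R // x ≠ 0} where
  Adj x y := x ≠ y ∧ (x : R) * y ∈ P
  symm := by
    refine ⟨?_⟩
    rintro x y ⟨h, hm⟩
    exact ⟨h.symm, by rwa [mul_comm]⟩
  loopless := by refine ⟨?_⟩; rintro x ⟨h, _⟩; exact h rfl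

def joinGraph {α β : Type*} (G : SimpleGraph α) (H : SimpleGraph β) :
    SimpleGraph (α ⊕ β) where
  Adj u v :=
    Sum.elim (fun x => Sum.elim (fun y => G.Adj x y) (fun _ => True) v)
             (fun x => Sum.elim (fun _ => True) (fun y => H.Adj x y) v) u
  symm := by refine ⟨?_⟩; rintro (x|x) (y|y) h <;> simp_all [SimpleGraph.adj_comm]
  loopless := by refine ⟨?_⟩; rintro (x|x) h <;> simp_all

/-!
Since `P` is prime, `xy ∈ P` iff `x ∈ P` or `y ∈ P`. Hence in `Γ_P(R)` the nonzero elements of `P`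
are pairwise adjacent, the elements outside `P` are pairwise non-adjacent, and each element of `P`
is adjacent to each element outside it: `Γ_P(R)` is the join of the complete graph on `P \ {0}`
with the edgeless graph on `R \ P`. For `R = ℤ/p^m`, the ideal `(p)` is the kernel of the reduction
`ℤ/p^m → ℤ/p` onto a field, so it is prime of index `p`, and `|P| = p^{m-1}`,
`|R \ P| = p^m - p^{m-1}`.
-/

section JoinGraph

variable {α α' β β' : Type*} {G : SimpleGraph α} {G' : SimpleGraph α'} {H : SimpleGraph β}
  {H' : SimpleGraph β'}

@[simp]
theorem joinGraph_adj_inl_inl {a a' : α} : (joinGraph G H).Adj (.inl a) (.inl a') ↔ G.Adj a a' :=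
  Iff.rfl

@[simp]
theorem joinGraph_adj_inr_inr {b b' : β} : (joinGraph G H).Adj (.inr b) (.inr b') ↔ H.Adj b b' :=
  Iff.rfl

@[simp]
theorem joinGraph_adj_inl_inr {a : α} {b : β} : (joinGraph G H).Adj (.inl a) (.inr b) :=
  trivial

@[simp]
theorem joinGraph_adj_inr_inl {a : α} {b : β} : (joinGraph G H).Adj (.inr b) (.inl a) :=
  trivial

def SimpleGraph.Iso.joinGraph (f : G ≃g G') (g : H ≃g H') : joinGraph G H ≃g joinGraph G' H' where
  toEquiv := f.toEquiv.sumCongr g.toEquiv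
  map_rel_iff' := by rintro (a | b) (a' | b') <;> simp [f.map_adj_iff, g.map_adj_iff]

def SimpleGraph.Iso.emptyGraph (e : α ≃ α') : emptyGraph α ≃g emptyGraph α' where
  toEquiv := e
  map_rel_iff' := by simp

end JoinGraph

namespace Ideal

variable {R : Type*} [Semiring R] (P : Ideal R)

theorem natCard_nonzero_mem :
    Nat.card {x : {x : R // x ≠ 0} // (x : R) ∈ P} = Nat.card P - 1 := by
  calc Nat.card {x : {x : R // x ≠ 0} // (x : R) ∈ P}
      = Nat.card ((P : Set R) \ {0} : Set R) :=
        Nat.card_congr ((Equiv.subtypeSubtypeEquivSubtypeInter _ _).trans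
          (Equiv.subtypeEquivRight fun x => by simp [and_comm]))
    _ = Nat.card P - 1 := by
      rw [Nat.card_coe_set_eq, Set.ncard_sdiff_singleton_of_mem P.zero_mem,
        ← Nat.card_coe_set_eq]
      rfl

theorem natCard_nonzero_notMem [Finite R] :
    Nat.card {x : {x : R // x ≠ 0} // (x : R) ∉ P} = Nat.card R - Nat.card P := by
  calc Nat.card {x : {x : R // x ≠ 0} // (x : R) ∉ P}
      = Nat.card ((P : Set R)ᶜ : Set R) :=
        Nat.card_congr (Equiv.subtypeSubtypeEquivSubtype (p := (· ≠ 0)) (q := (· ∉ P))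
          fun hx h => hx (h ▸ P.zero_mem))
    _ = Nat.card R - Nat.card P := by
      rw [Nat.card_coe_set_eq, Set.ncard_compl, ← Nat.card_coe_set_eq]
      rfl

end Ideal

section PrimeIdealGraph

variable {R : Type*} [CommRing R] (P : Ideal R) [P.IsPrime]

theorem primeIdealGraph_adj_iff {x y : {x : R // x ≠ 0}} :
    (primeIdealGraph R P).Adj x y ↔ x ≠ y ∧ ((x : R) ∈ P ∨ (y : R) ∈ P) :=
  and_congr_right fun _ => Ideal.IsPrime.mul_mem_iff_mem_or_mem ‹_›

open Classical in
noncomputable def primeIdealGraphIsoJoin :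
    primeIdealGraph R P ≃g joinGraph (⊤ : SimpleGraph {x : {x : R // x ≠ 0} // (x : R) ∈ P})
      (⊥ : SimpleGraph {x : {x : R // x ≠ 0} // (x : R) ∉ P}) where
  toEquiv := (Equiv.sumCompl fun x : {x : R // x ≠ 0} => (x : R) ∈ P).symm
  map_rel_iff' {x y} := by
    rw [primeIdealGraph_adj_iff]
    by_cases hx : (x : R) ∈ P <;> by_cases hy : (y : R) ∈ P <;>
      simp [Equiv.sumCompl_symm_apply_of_pos, Equiv.sumCompl_symm_apply_of_neg, hx, hy] <;>
      rintro rfl <;> contradiction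

theorem nonempty_primeIdealGraph_iso_joinGraph [Finite R] {a b : ℕ}
    (ha : Nat.card P - 1 = a) (hb : Nat.card R - Nat.card P = b) :
    Nonempty (primeIdealGraph R P ≃g
      joinGraph (⊤ : SimpleGraph (Fin a)) (⊥ : SimpleGraph (Fin b))) :=
  ⟨(primeIdealGraphIsoJoin P).trans <| SimpleGraph.Iso.joinGraph
    (.completeGraph <| (Finite.equivFin _).trans <| finCongr <| P.natCard_nonzero_mem.trans ha)
    (.emptyGraph <| (Finite.equivFin _).trans <| finCongr <| P.natCard_nonzero_notMem.trans hb)⟩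

end PrimeIdealGraph

theorem RingHom.natCard_ker_mul_natCard_of_surjective {R S : Type*} [Ring R] [Ring S]
    (f : R →+* S) (hf : Function.Surjective f) :
    Nat.card (RingHom.ker f) * Nat.card S = Nat.card R := by
  rw [Submodule.card_eq_card_quotient_mul_card (RingHom.ker f),
    Nat.card_congr (f.quotientKerEquivOfSurjective hf).toEquiv]

theorem ZMod.ker_castHom {d n : ℕ} (h : d ∣ n) :
    RingHom.ker (ZMod.castHom h (ZMod d)) = Ideal.span {(d : ZMod n)} := by
  refine le_antisymm (fun x hx => ?_) ((Ideal.span_singleton_le_iff_mem _).2 ?_)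
  · obtain ⟨a, rfl⟩ := ZMod.intCast_surjective x
    rw [RingHom.mem_ker, map_intCast, ZMod.intCast_zmod_eq_zero_iff_dvd] at hx
    obtain ⟨b, rfl⟩ := hx
    exact Ideal.mem_span_singleton.2 ⟨b, by push_cast; rfl⟩
  · rw [RingHom.mem_ker, map_natCast, ZMod.natCast_self]

/-- For `R = ℤ/p^mℤ` and `P = (p)`: `P` is prime, `|P| = p^{m-1}`, and
`Γ_P(R) ≅ K_{p^{m-1}-1} ∨ K̄_{p^{m-1}(p-1)}`. -/
theorem stmt_19 (p m : ℕ) (hp : p.Prime) (hm : 2 ≤ m)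
    (P : Ideal (ZMod (p ^ m))) (hP : P = Ideal.span {(p : ZMod (p ^ m))}) :
    P.IsPrime ∧ Nat.card P = p ^ (m - 1) ∧
    Nonempty
      (primeIdealGraph (ZMod (p ^ m)) P ≃g
        joinGraph (⊤ : SimpleGraph (Fin (p ^ (m - 1) - 1)))
          (⊥ : SimpleGraph (Fin (p ^ (m - 1) * (p - 1))))) := by
  have := Fact.mk hp
  have hdvd : p ∣ p ^ m := dvd_pow_self p (by omega)
  have hker : RingHom.ker (ZMod.castHom hdvd (ZMod p)) = P := hP ▸ ZMod.ker_castHom hdvd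
  have hprime : P.IsPrime := hker ▸ RingHom.ker_isPrime _
  have hpow : p ^ m = p ^ (m - 1) * p := by rw [← pow_succ]; congr; omega
  have hcard : Nat.card P = p ^ (m - 1) := by
    have := (ZMod.castHom hdvd (ZMod p)).natCard_ker_mul_natCard_of_surjective
      (ZMod.castHom_surjective hdvd)
    rw [hker, Nat.card_zmod, Nat.card_zmod] at this
    exact Nat.eq_of_mul_eq_mul_right hp.pos (this.trans hpow)
  refine ⟨hprime, hcard, nonempty_primeIdealGraph_iso_joinGraph P (by rw [hcard]) ?_⟩
  rw [hcard, Nat.card_zmod, hpow, Nat.mul_sub_one]
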